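/- arXiv:1404.3343 — 7 statements merged into one kernel-verified Lean document; each statement's English description precedes it below -/
import Mathlib

section
/- If a field E of characteristic zero has a small absolute Galois group (i.e., for every n there are only finitely many open subgroups of index n), then for every natural number n the quotient group E^× / (E^×)^n is finite. -/
/-! Kummer theory: choosing an `n`-th root `x` of `a` in the algebraic closure, the map
`σ ↦ σ x / x` takes values in the `n`-th roots of unity and is right-invariant under the
stabilizer of `x`, an open subgroup of index at most `n` (the orbit of `x` consists of roots of
`Xⁿ - a`). Smallness leaves only finitely many such maps, and two units with the same map differ
by an `n`-th power, since the quotient of their roots is Galois-invariant and hence lies in `E`. -/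

/-- A profinite group is *small* if for every `n` it has only finitely many open
subgroups of index `n`. -/
def IsSmallGroup (G : Type*) [Group G] [TopologicalSpace G] : Prop :=
  ∀ n : ℕ, {H : Subgroup G | IsOpen (H : Set G) ∧ H.index = n}.Finite

open MulAction
open Polynomial (nthRootsFinset mem_nthRootsFinset)

section RightInvariant

variable {G X : Type*} [Group G]

theorem Subgroup.finite_setOf_rightInvariant (H : Subgroup G) [H.FiniteIndex]
    {S : Set X} (hS : S.Finite) :
    {f : G → X | (∀ g, f g ∈ S) ∧ ∀ g, ∀ h ∈ H, f (g * h) = f g}.Finite := by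
  refine ((Set.Finite.pi fun _ : G ⧸ H => hS).image (· ∘ QuotientGroup.mk)).subset ?_
  rintro f ⟨hfS, hfH⟩
  refine ⟨fun q => f q.out, fun q _ => hfS _, funext fun g => ?_⟩
  obtain ⟨h, hh⟩ := QuotientGroup.mk_out_eq_mul H g
  simp only [Function.comp_apply, hh, hfH g h h.2]

theorem IsSmallGroup.finite_setOf_index_le [TopologicalSpace G] (hG : IsSmallGroup G) (n : ℕ) :
    {H : Subgroup G | IsOpen (H : Set G) ∧ H.index ≤ n}.Finite := by
  refine ((Finset.range (n + 1)).finite_toSet.biUnion fun m _ => hG m).subset ?_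
  rintro H ⟨hopen, hle⟩
  exact Set.mem_biUnion (Finset.mem_coe.2 (Finset.mem_range_succ_iff.2 hle)) ⟨hopen, rfl⟩

theorem IsSmallGroup.finite_setOf_rightInvariant_of_index_le [TopologicalSpace G]
    (hG : IsSmallGroup G) (n : ℕ) {S : Set X} (hS : S.Finite) :
    {f : G → X | (∀ g, f g ∈ S) ∧ ∃ H : Subgroup G, IsOpen (H : Set G) ∧ H.index ≠ 0 ∧
      H.index ≤ n ∧ ∀ g, ∀ h ∈ H, f (g * h) = f g}.Finite := by
  have hfin : {H : Subgroup G | IsOpen (H : Set G) ∧ H.index ≠ 0 ∧ H.index ≤ n}.Finite :=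
    (hG.finite_setOf_index_le n).subset fun H hH => ⟨hH.1, hH.2.2⟩
  refine (hfin.biUnion fun H hH =>
    haveI : H.FiniteIndex := ⟨hH.2.1⟩
    H.finite_setOf_rightInvariant hS).subset ?_
  rintro f ⟨hfS, H, hopen, hindex, hle, hfH⟩
  exact Set.mem_biUnion ⟨hopen, hindex, hle⟩ ⟨hfS, hfH⟩

end RightInvariant

theorem Polynomial.card_nthRootsFinset_le {R : Type*} [CommRing R] [IsDomain R] (n : ℕ) (a : R) :
    (nthRootsFinset n a).card ≤ n := by
  classical
  rw [Polynomial.nthRootsFinset_def]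
  exact (Multiset.toFinset_card_le _).trans (Polynomial.card_nthRoots n a)

section Kummer

variable {F K : Type*} [Field F] [Field K] [Algebra F K] {n : ℕ} {x : K} {a : F}

theorem AlgEquiv.apply_pow_eq_algebraMap (σ : Gal(K/F)) (hx : x ^ n = algebraMap F K a) :
    σ x ^ n = algebraMap F K a := by
  rw [← map_pow, hx, σ.commutes]

theorem orbit_subset_nthRootsFinset (hn : 0 < n) (hx : x ^ n = algebraMap F K a) :
    orbit Gal(K/F) x ⊆ nthRootsFinset n (algebraMap F K a) := by
  rintro _ ⟨σ, rfl⟩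
  exact (mem_nthRootsFinset hn _).2 (σ.apply_pow_eq_algebraMap hx)

theorem index_stabilizer_ne_zero_of_pow_eq_algebraMap (hn : 0 < n)
    (hx : x ^ n = algebraMap F K a) : (stabilizer Gal(K/F) x).index ≠ 0 := by
  rw [index_stabilizer, ← Nat.pos_iff_ne_zero,
    Set.ncard_pos ((Finset.finite_toSet _).subset (orbit_subset_nthRootsFinset hn hx))]
  exact ⟨x, mem_orbit_self x⟩

theorem index_stabilizer_le_of_pow_eq_algebraMap (hn : 0 < n) (hx : x ^ n = algebraMap F K a) :
    (stabilizer Gal(K/F) x).index ≤ n := by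
  rw [index_stabilizer]
  calc (orbit Gal(K/F) x).ncard ≤ (nthRootsFinset n (algebraMap F K a) : Set K).ncard :=
        Set.ncard_le_ncard (orbit_subset_nthRootsFinset hn hx) (Finset.finite_toSet _)
    _ ≤ n := (Set.ncard_coe_finset _).trans_le (Polynomial.card_nthRootsFinset_le n _)

theorem apply_div_self_mem_nthRootsFinset_one (hn : 0 < n) (ha : a ≠ 0)
    (hx : x ^ n = algebraMap F K a) (σ : Gal(K/F)) :
    σ x / x ∈ nthRootsFinset n (1 : K) := by
  rw [mem_nthRootsFinset hn, div_pow, σ.apply_pow_eq_algebraMap hx, hx,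
    div_self ((map_ne_zero _).2 ha)]

theorem mul_apply_div_self_of_mem_stabilizer (σ : Gal(K/F)) {τ : Gal(K/F)}
    (hτ : τ ∈ stabilizer Gal(K/F) x) : (σ * τ) x / x = σ x / x := by
  rw [AlgEquiv.mul_apply, show τ x = x from hτ]

theorem mk_eq_mk_of_forall_apply_div_eq [IsGalois F K] (hn : 0 < n) {a a' : Fˣ} {x x' : K}
    (hx : x ^ n = algebraMap F K a) (hx' : x' ^ n = algebraMap F K a')
    (h : ∀ σ : Gal(K/F), σ x / x = σ x' / x') :
    (a : Fˣ ⧸ (powMonoidHom n : Fˣ →* Fˣ).range) = a' := by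
  have hne : ∀ {y : K} {b : Fˣ}, y ^ n = algebraMap F K b → y ≠ 0 := fun {y b} hy h0 => by
    rw [h0, zero_pow hn.ne'] at hy
    exact (map_ne_zero _).2 b.ne_zero hy.symm
  obtain ⟨e, he⟩ : x / x' ∈ Set.range (algebraMap F K) := by
    refine (InfiniteGalois.mem_range_algebraMap_iff_fixed _).2 fun σ => ?_
    have := h σ
    rw [div_eq_div_iff (hne hx) (hne hx')] at this
    rw [map_div₀, div_eq_div_iff ((map_ne_zero σ).2 (hne hx')) (hne hx')]
    linear_combination this
  have he0 : e ≠ 0 := by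
    rintro rfl
    exact div_ne_zero (hne hx) (hne hx') (by rw [← he, map_zero])
  have ha : a = a' * Units.mk0 e he0 ^ n := by
    refine Units.ext ((algebraMap F K).injective ?_)
    rw [Units.val_mul, Units.val_pow_eq_pow_val, Units.val_mk0, map_mul, map_pow, he, ← hx, ← hx',
      div_pow, mul_div_cancel₀ _ (pow_ne_zero n (hne hx'))]
  rw [ha]
  exact QuotientGroup.mk_mul_of_mem _ ⟨_, rfl⟩

end Kummer

/-- If a field `E` of characteristic zero has a small absolute Galois group, then for every
`n ≥ 1` the quotient `Eˣ/(Eˣ)ⁿ` is finite. -/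
theorem stmt0 (E : Type*) [Field E] [CharZero E]
    (hsmall : IsSmallGroup (AlgebraicClosure E ≃ₐ[E] AlgebraicClosure E)) :
    ∀ n : ℕ, 0 < n → Finite (Eˣ ⧸ (powMonoidHom n : Eˣ →* Eˣ).range) := by
  intro n hn
  choose root hroot using fun a : Eˣ =>
    IsAlgClosed.exists_pow_nat_eq (algebraMap E (AlgebraicClosure E) a) hn
  let kummer (q : Eˣ ⧸ (powMonoidHom n : Eˣ →* Eˣ).range) (σ : Gal(AlgebraicClosure E/E)) :=
    σ (root q.out) / root q.out
  have hkummer : Function.Injective kummer := fun q q' h => by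
    simpa using mk_eq_mk_of_forall_apply_div_eq hn (hroot q.out) (hroot q'.out) (congrFun h)
  have : Finite (Set.range kummer) := Set.Finite.to_subtype <|
    (hsmall.finite_setOf_rightInvariant_of_index_le n
      (nthRootsFinset n (1 : AlgebraicClosure E)).finite_toSet).subset <| by
      rintro _ ⟨q, rfl⟩
      exact ⟨apply_div_self_mem_nthRootsFinset_one hn q.out.ne_zero (hroot q.out),
        stabilizer _ (root q.out), stabilizer_isOpen_of_isIntegral _,
        index_stabilizer_ne_zero_of_pow_eq_algebraMap hn (hroot q.out),
        index_stabilizer_le_of_pow_eq_algebraMap hn (hroot q.out),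
        fun σ τ hτ => mul_apply_div_self_of_mem_stabilizer σ hτ⟩
  exact Finite.of_injective_finite_range hkummer
end

section
/- Let E be a field of characteristic zero containing the n-th roots of unity. Then E^×/(E^×)^n is finite if and only if E has only finitely many cyclic Galois extensions (inside a fixed algebraic closure) of degree dividing n. -/
/-! Since `E` contains the `n`-th roots of unity, the cyclic extensions of `E` of degree dividing
`n` are exactly the fields `E(ⁿ√a)` with `a ∈ Eˣ`, and `E(ⁿ√a)` only depends on the class of `a`
modulo `n`-th powers; so a finite `Eˣ/(Eˣ)ⁿ` gives finitely many of them. Conversely, if there are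
finitely many, their compositum `L` is a finite Galois extension containing an `n`-th root `α_a`
of every `a`. The Kummer character `σ ↦ σ α_a / α_a` with values in the finite group `μ_n(L)`
determines the class of `a`: if two characters agree, `α_a / α_b` is Galois-invariant, hence lies
in `E`. So `Eˣ/(Eˣ)ⁿ` embeds into the finite set of maps `Gal(L/E) → μ_n(L)`. -/

open Polynomial IntermediateField

section RootsOfUnity

variable {E L : Type*} [Field E] [Field L] [Algebra E L] {n : ℕ} [NeZero n] {ζ : E}

theorem IsPrimitiveRoot.mem_range_algebraMap_of_pow_eq_one (hζ : IsPrimitiveRoot ζ n) {x : L}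
    (hx : x ^ n = 1) : x ∈ Set.range (algebraMap E L) := by
  obtain ⟨i, -, rfl⟩ := (hζ.map_of_injective (algebraMap E L).injective).eq_pow_of_pow_eq_one hx
  exact ⟨ζ ^ i, map_pow _ _ _⟩

theorem IntermediateField.adjoin_simple_le_of_pow_eq (hζ : IsPrimitiveRoot ζ n) {α β : L}
    (h : α ^ n = β ^ n) : E⟮α⟯ ≤ E⟮β⟯ := by
  rw [adjoin_simple_le_iff]
  rcases eq_or_ne β 0 with rfl | hβ
  · rw [zero_pow (NeZero.ne n), pow_eq_zero_iff (NeZero.ne n)] at h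
    rw [h]
    exact zero_mem _
  obtain ⟨c, hc⟩ := hζ.mem_range_algebraMap_of_pow_eq_one (x := α / β)
    (by rw [div_pow, h, div_self (pow_ne_zero n hβ)])
  rw [← div_mul_cancel₀ α hβ, ← hc]
  exact mul_mem (IntermediateField.algebraMap_mem _ c) (mem_adjoin_simple_self E β)

theorem Polynomial.mem_rootSet_X_pow_sub_C {a : E} {x : L} :
    x ∈ (X ^ n - C a).rootSet L ↔ x ^ n = algebraMap E L a := by
  simp [mem_rootSet_of_ne (X_pow_sub_C_ne_zero (NeZero.pos n) a), sub_eq_zero]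

end RootsOfUnity

section KummerCharacter

variable {E L : Type*} [Field E] [Field L] [Algebra E L] {n : ℕ} {ζ : E} {a : E} {α : Lˣ}

theorem units_map_div_pow_eq_one (hα : (α : L) ^ n = algebraMap E L a) (σ : Gal(L/E)) :
    (Units.map σ α / α) ^ n = 1 := by
  rw [div_pow, ← map_pow, div_eq_one]
  ext
  simp only [Units.coe_map, MonoidHom.coe_coe, Units.val_pow_eq_pow_val, hα, AlgEquiv.commutes]

variable [NeZero n]

def kummerChar (hζ : IsPrimitiveRoot ζ n) (hα : (α : L) ^ n = algebraMap E L a) :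
    Gal(L/E) →* rootsOfUnity n L where
  toFun σ := ⟨Units.map σ α / α, units_map_div_pow_eq_one hα σ⟩
  map_one' := by ext; simp
  map_mul' σ τ := by
    -- `τ α / α` is an `n`-th root of unity, hence lies in `E` and is fixed by `σ`.
    obtain ⟨c, hc⟩ := hζ.mem_range_algebraMap_of_pow_eq_one
      (congrArg Units.val (units_map_div_pow_eq_one hα τ))
    have hτ : τ α = algebraMap E L c * α := by
      rw [hc]; simp
    ext
    simp only [Units.val_div_eq_div_val, Units.coe_map, MonoidHom.coe_coe, AlgEquiv.mul_apply,
      hτ, map_mul, AlgEquiv.commutes, Subgroup.coe_mul, Units.val_mul]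
    field_simp

@[simp]
theorem coe_kummerChar_apply (hζ : IsPrimitiveRoot ζ n) (hα : (α : L) ^ n = algebraMap E L a)
    (σ : Gal(L/E)) : ((kummerChar hζ hα σ : Lˣ) : L) = σ α / α := by
  simp [kummerChar]

theorem kummerChar_injective [IsSplittingField E L (X ^ n - C a)] (hζ : IsPrimitiveRoot ζ n)
    (hα : (α : L) ^ n = algebraMap E L a) : Function.Injective (kummerChar hζ hα) := by
  refine (injective_iff_map_eq_one _).mpr fun σ hσ => ?_
  have hσα : σ α = α := by
    simpa [div_eq_one_iff_eq α.ne_zero] using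
      congrArg (fun u : rootsOfUnity n L => ((u : Lˣ) : L)) hσ
  refine AlgEquiv.coe_toAlgHom_injective <| AlgHom.ext_of_adjoin_eq_top
    (IsSplittingField.adjoin_rootSet L (X ^ n - C a)) fun x hx => ?_
  obtain ⟨c, hc⟩ := hζ.mem_range_algebraMap_of_pow_eq_one (x := x / α) (by
    rw [div_pow, mem_rootSet_X_pow_sub_C.mp hx, ← hα, div_self (pow_ne_zero n α.ne_zero)])
  rw [← div_mul_cancel₀ x α.ne_zero, ← hc]
  simp [hσα]

end KummerCharacter

section KummerPairing

variable {E L : Type*} [Field E] [Field L] [Algebra E L] [FiniteDimensional E L] [IsGalois E L]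
  {n : ℕ} [NeZero n] {ζ : E}

theorem mk_eq_of_kummerChar_eq (hζ : IsPrimitiveRoot ζ n) {a b : Eˣ} {α β : Lˣ}
    (hα : (α : L) ^ n = algebraMap E L a) (hβ : (β : L) ^ n = algebraMap E L b)
    (h : ∀ σ, kummerChar hζ hα σ = kummerChar hζ hβ σ) :
    (a : Eˣ ⧸ (powMonoidHom n : Eˣ →* Eˣ).range) = b := by
  have hfix : ∀ σ : Gal(L/E), σ (β / α) = β / α := fun σ => by
    have := congrArg (fun u : rootsOfUnity n L => ((u : Lˣ) : L)) (h σ)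
    simp only [coe_kummerChar_apply] at this
    rw [map_div₀, div_eq_div_iff ((map_ne_zero σ).mpr α.ne_zero) α.ne_zero]
    rw [div_eq_div_iff α.ne_zero β.ne_zero] at this
    linear_combination -this
  obtain ⟨c, hc⟩ := (IsGalois.mem_range_algebraMap_iff_fixed _).mpr hfix
  have hc0 : c ≠ 0 :=
    (map_ne_zero (algebraMap E L)).mp (hc ▸ div_ne_zero β.ne_zero α.ne_zero)
  rw [QuotientGroup.eq]
  refine ⟨Units.mk0 c hc0, Units.ext <| (algebraMap E L).injective ?_⟩
  simp only [powMonoidHom_apply, Units.val_pow_eq_pow_val, Units.val_mk0, map_pow, hc, div_pow,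
    hβ, hα, Units.val_mul, Units.val_inv_eq_inv_val, map_mul, map_inv₀]
  ring

theorem finite_quotient_powMonoidHom_range (hζ : IsPrimitiveRoot ζ n)
    (h : ∀ a : Eˣ, ∃ α : Lˣ, (α : L) ^ n = algebraMap E L a) :
    Finite (Eˣ ⧸ (powMonoidHom n : Eˣ →* Eˣ).range) := by
  choose α hα using h
  exact Finite.of_injective (fun q => ⇑(kummerChar hζ (hα q.out))) fun q₁ q₂ h => by
    simpa using mk_eq_of_kummerChar_eq hζ (hα q₁.out) (hα q₂.out) (congrFun h)

end KummerPairing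

section SplittingField

variable {E L : Type*} [Field E] [Field L] [Algebra E L] {n : ℕ} [NeZero n] {ζ : E} {a : E}
  [IsSplittingField E L (X ^ n - C a)]

theorem isGalois_of_isSplittingField_X_pow_sub_C_of_ne_zero (hζ : IsPrimitiveRoot ζ n)
    (ha : a ≠ 0) : IsGalois E L :=
  IsGalois.of_separable_splitting_field (separable_X_pow_sub_C a hζ.neZero'.out ha)

theorem exists_units_pow_eq_of_isSplittingField_X_pow_sub_C (ha : a ≠ 0) :
    ∃ α : Lˣ, (α : L) ^ n = algebraMap E L a := by
  obtain ⟨α, hα⟩ : ∃ α : L, α ^ n = algebraMap E L a := ⟨_, rootOfSplitsXPowSubC_pow a L⟩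
  exact ⟨Units.mk0 α (ne_zero_pow (NeZero.ne n) (hα ▸ (_root_.map_ne_zero _).mpr ha)), hα⟩

theorem isCyclic_of_isSplittingField_X_pow_sub_C_of_ne_zero (hζ : IsPrimitiveRoot ζ n)
    (ha : a ≠ 0) : IsCyclic Gal(L/E) := by
  obtain ⟨α, hα⟩ := exists_units_pow_eq_of_isSplittingField_X_pow_sub_C (L := L) (n := n) ha
  exact isCyclic_of_injective _ (kummerChar_injective hζ hα)

theorem finrank_dvd_of_isSplittingField_X_pow_sub_C (hζ : IsPrimitiveRoot ζ n) (ha : a ≠ 0) :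
    Module.finrank E L ∣ n := by
  obtain ⟨α, hα⟩ := exists_units_pow_eq_of_isSplittingField_X_pow_sub_C (L := L) (n := n) ha
  have := IsSplittingField.finiteDimensional L (X ^ n - C a)
  have := isGalois_of_isSplittingField_X_pow_sub_C_of_ne_zero hζ ha (L := L)
  rw [← IsGalois.card_aut_eq_finrank,
    ← (hζ.map_of_injective (algebraMap E L).injective).card_rootsOfUnity]
  exact Subgroup.card_dvd_of_injective _ (kummerChar_injective hζ hα)

end SplittingField

section AlgebraicClosure

variable (E : Type*) [Field E] (n : ℕ)

noncomputable def kummerField (a : E) : IntermediateField E (AlgebraicClosure E) :=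
  adjoin E ((X ^ n - C a).rootSet (AlgebraicClosure E))

instance (a : E) : IsSplittingField E (kummerField E n a) (X ^ n - C a) :=
  adjoin_rootSet_isSplittingField (IsAlgClosed.splits _)

instance (a : E) : FiniteDimensional E (kummerField E n a) :=
  IsSplittingField.finiteDimensional _ (X ^ n - C a)

variable {E n} [NeZero n] {ζ : E}

theorem kummerField_eq_adjoin_simple (hζ : IsPrimitiveRoot ζ n) {a : E}
    {α : AlgebraicClosure E} (hα : α ^ n = algebraMap E _ a) : kummerField E n a = E⟮α⟯ := by
  refine le_antisymm (adjoin_le_iff.mpr fun x hx => ?_)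
    (adjoin_simple_le_iff.mpr (subset_adjoin _ _ (mem_rootSet_X_pow_sub_C.mpr hα)))
  exact adjoin_simple_le_of_pow_eq hζ ((mem_rootSet_X_pow_sub_C.mp hx).trans hα.symm)
    (mem_adjoin_simple_self E x)

theorem kummerField_pow_mul_le (a : E) {c : E} (hc : c ≠ 0) :
    kummerField E n (c ^ n * a) ≤ kummerField E n a := by
  refine adjoin_le_iff.mpr fun x hx => ?_
  have hc' : algebraMap E (AlgebraicClosure E) c ≠ 0 := (_root_.map_ne_zero _).mpr hc
  have hxc : x / algebraMap E _ c ∈ kummerField E n a := by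
    refine subset_adjoin _ _ (mem_rootSet_X_pow_sub_C.mpr ?_)
    rw [div_pow, mem_rootSet_X_pow_sub_C.mp hx, map_mul, map_pow, mul_div_cancel_left₀ _
      (pow_ne_zero n hc')]
  rw [← div_mul_cancel₀ x hc']
  exact mul_mem hxc (IntermediateField.algebraMap_mem _ c)

theorem kummerField_eq_of_mk_eq {a b : Eˣ}
    (h : (a : Eˣ ⧸ (powMonoidHom n : Eˣ →* Eˣ).range) = b) :
    kummerField E n a = kummerField E n b := by
  obtain ⟨c, hc⟩ := QuotientGroup.eq.mp h
  have hb : b = c ^ n * a := by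
    rw [powMonoidHom_apply] at hc
    rw [hc, mul_comm, mul_inv_cancel_left]
  have ha : a = c⁻¹ ^ n * b := by rw [hb]; group
  refine le_antisymm ?_ ?_
  · rw [ha]; exact_mod_cast kummerField_pow_mul_le _ (c⁻¹).ne_zero
  · rw [hb]; exact_mod_cast kummerField_pow_mul_le _ c.ne_zero

theorem exists_kummerField_eq (hζ : IsPrimitiveRoot ζ n)
    (K : IntermediateField E (AlgebraicClosure E)) [FiniteDimensional E K] [IsGalois E K]
    [IsCyclic Gal(K/E)] (hK : Module.finrank E K ∣ n) : ∃ a : Eˣ, kummerField E n a = K := by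
  set d := Module.finrank E K
  have hd : 0 < d := Module.finrank_pos
  have hζd : IsPrimitiveRoot (ζ ^ (n / d)) d := hζ.pow (NeZero.pos n) (Nat.div_mul_cancel hK).symm
  obtain ⟨α, ⟨e, he⟩, hα⟩ :=
    exists_root_adjoin_eq_top_of_isCyclic E K ⟨_, (mem_primitiveRoots hd).mpr hζd⟩
  have hKα : E⟮(α : AlgebraicClosure E)⟯ = K := by
    simpa only [lift_adjoin_simple, lift_top] using congrArg lift hα
  have hαd : (α : AlgebraicClosure E) ^ d = algebraMap E _ e := by
    rw [IsScalarTower.algebraMap_apply E K (AlgebraicClosure E), he]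
    rfl
  rcases eq_or_ne e 0 with rfl | he0
  · refine ⟨1, ?_⟩
    rw [map_zero, pow_eq_zero_iff hd.ne'] at hαd
    rw [← hKα, hαd, adjoin_zero, kummerField_eq_adjoin_simple hζ (α := 1) (by simp), adjoin_one]
  · refine ⟨Units.mk0 e he0 ^ (n / d), ?_⟩
    rw [← hKα]
    refine kummerField_eq_adjoin_simple hζ ?_
    rw [Units.val_pow_eq_pow_val, Units.val_mk0, map_pow, ← hαd, ← pow_mul,
      Nat.mul_div_cancel' hK]

theorem range_kummerField (hζ : IsPrimitiveRoot ζ n) :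
    Set.range (fun a : Eˣ => kummerField E n a) =
      {K : IntermediateField E (AlgebraicClosure E) |
        FiniteDimensional E K ∧ IsGalois E K ∧ IsCyclic (K ≃ₐ[E] K) ∧
          Module.finrank E K ∣ n} := by
  ext K
  constructor
  · rintro ⟨a, rfl⟩
    exact ⟨inferInstance, isGalois_of_isSplittingField_X_pow_sub_C_of_ne_zero hζ a.ne_zero,
      isCyclic_of_isSplittingField_X_pow_sub_C_of_ne_zero hζ a.ne_zero,
      finrank_dvd_of_isSplittingField_X_pow_sub_C hζ a.ne_zero⟩
  · rintro ⟨hfd, hgal, hcyc, hdvd⟩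
    exact exists_kummerField_eq hζ K hdvd

theorem finite_range_kummerField [Finite (Eˣ ⧸ (powMonoidHom n : Eˣ →* Eˣ).range)] :
    (Set.range fun a : Eˣ => kummerField E n a).Finite := by
  refine (Set.finite_range fun q : Eˣ ⧸ (powMonoidHom n : Eˣ →* Eˣ).range =>
    kummerField E n (q.out : E)).subset ?_
  rintro _ ⟨a, rfl⟩
  exact ⟨a, kummerField_eq_of_mk_eq (QuotientGroup.out_eq' _)⟩

theorem finite_quotient_of_finite_range_kummerField (hζ : IsPrimitiveRoot ζ n)
    (h : (Set.range fun a : Eˣ => kummerField E n a).Finite) :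
    Finite (Eˣ ⧸ (powMonoidHom n : Eˣ →* Eˣ).range) := by
  set S := Set.range fun a : Eˣ => kummerField E n a
  have := h.to_subtype
  have : ∀ K : S, IsGalois E K.1 := by
    rintro ⟨_, a, rfl⟩
    exact isGalois_of_isSplittingField_X_pow_sub_C_of_ne_zero hζ a.ne_zero
  have : ∀ K : S, FiniteDimensional E K.1 := by
    rintro ⟨_, a, rfl⟩
    infer_instance
  let L := ⨆ K : S, K.1
  have : IsGalois E L := ⟨⟩
  refine finite_quotient_powMonoidHom_range (L := L) hζ fun a => ?_
  obtain ⟨ρ, hρ⟩ := IsAlgClosed.exists_pow_nat_eq (algebraMap E (AlgebraicClosure E) a)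
    (NeZero.pos n)
  have hρL : ρ ∈ L :=
    le_iSup (fun K : S => K.1) ⟨_, a, rfl⟩ (subset_adjoin _ _ (mem_rootSet_X_pow_sub_C.mpr hρ))
  have hρ0 : ρ ≠ 0 := ne_zero_pow (NeZero.ne n) (hρ ▸ (_root_.map_ne_zero _).mpr a.ne_zero)
  exact ⟨Units.mk0 ⟨ρ, hρL⟩ (Subtype.coe_ne_coe.mp hρ0), Subtype.ext hρ⟩

end AlgebraicClosure

theorem stmt1_general (E : Type*) [Field E] (n : ℕ) (hn : 0 < n)
    (hμ : ∃ ζ : E, IsPrimitiveRoot ζ n) :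
    Finite (Eˣ ⧸ (powMonoidHom n : Eˣ →* Eˣ).range) ↔
      {K : IntermediateField E (AlgebraicClosure E) |
        FiniteDimensional E K ∧ IsGalois E K ∧ IsCyclic (K ≃ₐ[E] K) ∧
          Module.finrank E K ∣ n}.Finite := by
  obtain ⟨ζ, hζ⟩ := hμ
  have : NeZero n := ⟨hn.ne'⟩
  rw [← range_kummerField hζ]
  exact ⟨fun _ => finite_range_kummerField, finite_quotient_of_finite_range_kummerField hζ⟩

/-- Kummer-theoretic criterion: for a field `E` of characteristic zero containing the `n`-th
roots of unity, `Eˣ/(Eˣ)ⁿ` is finite iff `E` has only finitely many cyclic Galois extensions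
(inside a fixed algebraic closure) of degree dividing `n`. -/
theorem stmt1 (E : Type*) [Field E] [CharZero E] (n : ℕ) (hn : 0 < n)
    (hμ : ∃ ζ : E, IsPrimitiveRoot ζ n) :
    Finite (Eˣ ⧸ (powMonoidHom n : Eˣ →* Eˣ).range) ↔
      {K : IntermediateField E (AlgebraicClosure E) |
        FiniteDimensional E K ∧ IsGalois E K ∧ IsCyclic (K ≃ₐ[E] K) ∧
          Module.finrank E K ∣ n}.Finite :=
  stmt1_general E n hn hμ
end

section
/- Let S be a non-abelian finite simple group, κ an infinite cardinal, and G = S^κ the profinite product. Then for every n ∈ ℕ and every open subgroup H ≤ G of index at most m, the number of closed normal subgroups N of H with H/N cyclic of order n is at most 2^{m!}; in particular this number is finite, uniformly bounded in terms of m. -/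
/-- The set of closed normal subgroups `N` of `G` with `G/N` cyclic of order `n`,
encoded as kernels of surjective homomorphisms onto the cyclic group of order `n`. -/
def cyclicKernels (G : Type*) [Group G] [TopologicalSpace G] (n : ℕ) : Set (Subgroup G) :=
  {N | IsClosed (N : Set G) ∧
    ∃ f : G →* Multiplicative (ZMod n), Function.Surjective f ∧ f.ker = N}

/-!
An open subgroup `H` of `S^ι` contains the subgroup of elements trivial on a finite set of
coordinates, hence so does its normal core `C`, of index at most `m!`. A normal subgroup of `S^ι`
containing such a subgroup consists, because `S` is simple with trivial centre, of all elements
trivial on some set `A` of coordinates. As `S` is finite and perfect, so is `S^S`, and every `x`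
trivial on `A` is the image of `id` under a homomorphism `S^S → H`; thus `C ∩ H ≤ [H, H]` lies in
every kernel of a map from `H` to an abelian group. Such kernels correspond to subgroups of
`H ⧸ (C ∩ H)`, a group of order at most `m!`.
-/

open Subgroup
open scoped commutatorElement

namespace IsSimpleGroup

variable {S : Type*} [Group S] [IsSimpleGroup S]

theorem commutator_eq_top_of_not_comm (h : ∃ a b : S, a * b ≠ b * a) : commutator S = ⊤ := by
  refine (inferInstance : (commutator S).Normal).eq_bot_or_eq_top.resolve_left fun hbot => ?_
  obtain ⟨a, b, hab⟩ := h
  have hab' : ⁅a, b⁆ ∈ commutator S := commutator_mem_commutator (mem_top a) (mem_top b)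
  rw [hbot, mem_bot] at hab'
  exact hab (commutatorElement_eq_one_iff_mul_comm.mp hab')

theorem center_eq_bot_of_not_comm (h : ∃ a b : S, a * b ≠ b * a) : center S = ⊥ := by
  refine (inferInstance : (center S).Normal).eq_bot_or_eq_top.resolve_right fun htop => ?_
  obtain ⟨a, b, hab⟩ := h
  exact hab (mem_center_iff.mp (htop ▸ mem_top b) a)

end IsSimpleGroup

section Pi

variable {ι : Type*}

theorem commutator_pi_eq_top [Finite ι] {G : ι → Type*} [∀ i, Group (G i)]
    (h : ∀ i, commutator (G i) = ⊤) : commutator (∀ i, G i) = ⊤ := by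
  rw [commutator_def, ← pi_top Set.univ, commutator_pi_pi_of_finite]
  simp only [← commutator_def, h, pi_top]

theorem Pi.commutatorElement_mulSingle {G : ι → Type*} [∀ i, Group (G i)]
    [DecidableEq ι] (x : ∀ i, G i) (i : ι) (g : G i) :
    ⁅x, Pi.mulSingle i g⁆ = Pi.mulSingle i ⁅x i, g⁆ := by
  ext j
  by_cases hj : j = i
  · subst hj
    simp [commutatorElement_def]
  · simp [commutatorElement_def, hj]

theorem exists_finset_pi_bot_le_of_isOpen {G : ι → Type*} [∀ i, Group (G i)]
    [∀ i, TopologicalSpace (G i)] {H : Subgroup (∀ i, G i)} (hH : IsOpen (H : Set (∀ i, G i))) :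
    ∃ F : Finset ι, pi (F : Set ι) (fun _ => ⊥) ≤ H := by
  obtain ⟨F, u, hu, hFu⟩ := isOpen_pi_iff.mp hH 1 H.one_mem
  refine ⟨F, fun x hx => hFu fun i hi => ?_⟩
  rw [mem_bot.mp ((mem_pi _).mp hx i hi)]
  exact (hu i hi).2

instance normal_pi {G : ι → Type*} [∀ i, Group (G i)] (I : Set ι) (H : ∀ i, Subgroup (G i))
    [∀ i, (H i).Normal] : (pi I H).Normal where
  conj_mem _ hx g := (mem_pi _).mpr fun i hi => (inferInstance : (H i).Normal).conj_mem _
    ((mem_pi _).mp hx i hi) (g i)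

instance finiteIndex_pi_bot {G : ι → Type*} [∀ i, Group (G i)] [∀ i, Finite (G i)]
    (F : Set ι) [Finite F] : (pi F fun i => (⊥ : Subgroup (G i))).FiniteIndex := by
  have hker : (pi F fun i => (⊥ : Subgroup (G i))) =
      (MonoidHom.pi fun i : F => Pi.evalMonoidHom G i).ker := by
    ext x
    simp [mem_pi, funext_iff]
  rw [hker]
  exact finiteIndex_ker _

variable {S : Type*} [Group S]

theorem mulSingle_mem_of_normal [DecidableEq ι] [IsSimpleGroup S] (hZ : center S = ⊥)
    {C : Subgroup (ι → S)} [C.Normal] {c : ι → S} (hc : c ∈ C) {i : ι} (hci : c i ≠ 1) (s : S) :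
    Pi.mulSingle i s ∈ C := by
  obtain ⟨g, hg⟩ : ∃ g : S, ⁅c i, g⁆ ≠ 1 := by
    by_contra! h
    refine hci (mem_bot.mp (hZ ▸ mem_center_iff.mpr fun g => ?_))
    exact (commutatorElement_eq_one_iff_mul_comm.mp (h g)).symm
  -- the `i`-th factor meets `C` in a normal subgroup containing `⁅c i, g⁆ = ⁅c, mulSingle i g⁆ i`
  have hT : C.comap (MonoidHom.mulSingle _ i) = ⊤ := by
    refine ((inferInstance : C.Normal).comap _).eq_bot_or_eq_top.resolve_left fun hbot => hg ?_
    rw [← mem_bot, ← hbot, mem_comap, MonoidHom.mulSingle_apply, ← Pi.commutatorElement_mulSingle]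
    exact commutator_le_left C ⊤ (commutator_mem_commutator hc (mem_top _))
  exact mem_comap.mp (hT ▸ mem_top s)

theorem eq_pi_bot_of_pi_bot_le [IsSimpleGroup S] (hZ : center S = ⊥) {C : Subgroup (ι → S)}
    [C.Normal] {F : Finset ι} (hF : pi (F : Set ι) (fun _ => ⊥) ≤ C) :
    C = pi {i | ∀ c ∈ C, c i = 1} (fun _ => ⊥) := by
  classical
  refine le_antisymm (fun c hc i hi => mem_bot.mpr (hi c hc)) fun x hx => ?_
  rw [← Set.mulIndicator_self_mul_compl (F : Set ι) x]
  refine mul_mem (Submonoid.pi_mem_of_mulSingle_mem_aux F _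
    (fun i hi => Set.mulIndicator_of_notMem hi x) fun i hi => ?_) (hF ?_)
  · rw [Set.mulIndicator_of_mem (Finset.mem_coe.mpr hi)]
    by_cases hA : ∀ c ∈ C, c i = 1
    · rw [mem_bot.mp ((mem_pi _).mp hx i hA), Pi.mulSingle_one]
      exact one_mem C
    · push Not at hA
      obtain ⟨c, hc, hci⟩ := hA
      exact mulSingle_mem_of_normal hZ hc hci _
  · exact (mem_pi _).mpr fun i hi => mem_bot.mpr (Set.mulIndicator_of_notMem (not_not_intro hi) x)

theorem pi_bot_subgroupOf_le_commutator [Finite S] (hS : commutator S = ⊤) {A : Set ι}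
    {H : Subgroup (ι → S)} (hAH : pi A (fun _ => ⊥) ≤ H) :
    (pi A fun _ => ⊥).subgroupOf H ≤ commutator H := by
  intro x hx
  have hxA : ∀ y : ι → S, Aᶜ.mulIndicator y ∈ pi A fun _ => ⊥ := fun y =>
    (mem_pi _).mpr fun i hi => mem_bot.mpr (Set.mulIndicator_of_notMem (not_not_intro hi) y)
  -- `g ↦ g ∘ x`, cut off to `Aᶜ` so that it lands in `H`
  let Ψ : (S → S) →* H := ((Set.mulIndicatorHom S Aᶜ).comp
    (MonoidHom.pi fun i => Pi.evalMonoidHom (fun _ => S) ((x : ι → S) i))).codRestrict H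
    fun g => hAH (hxA _)
  have hΨ : Ψ id = x := by
    refine Subtype.ext (Set.mulIndicator_eq_self.mpr fun i hi hiA => hi ?_)
    exact mem_bot.mp ((mem_pi _).mp (mem_subgroupOf.mp hx) i hiA)
  have hperf : commutator (S → S) = ⊤ := commutator_pi_eq_top fun _ => hS
  rw [← hΨ, commutator_def]
  refine (map_commutator ⊤ ⊤ Ψ).trans_le (commutator_mono le_top le_top) (mem_map_of_mem Ψ ?_)
  rw [← commutator_def, hperf]
  exact mem_top _

end Pi

theorem Subgroup.index_normalCore_le_factorial {G : Type*} [Group G] (H : Subgroup G)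
    [H.FiniteIndex] : H.normalCore.index ≤ H.index.factorial := by
  rw [normalCore_eq_ker, index_ker, index_eq_card, ← Nat.card_perm]
  exact card_le_card_group _

theorem Subgroup.finite_setOf_le_and_card_le {G : Type*} [Group G] (J : Subgroup G) [J.Normal]
    [J.FiniteIndex] :
    {N : Subgroup G | J ≤ N}.Finite ∧ Nat.card {N : Subgroup G | J ≤ N} ≤ 2 ^ J.index := by
  classical
  let e : {N : Subgroup G // J ≤ N} ≃ Subgroup (G ⧸ J) :=
    (QuotientGroup.comapMk'OrderIso J).symm.toEquiv
  have : Fintype (G ⧸ J) := Fintype.ofFinite _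
  have : Finite (Subgroup (G ⧸ J)) := Finite.of_injective _ SetLike.coe_injective
  refine ⟨Set.finite_coe_iff.mp (Finite.of_equiv _ e.symm), ?_⟩
  calc Nat.card {N : Subgroup G | J ≤ N} = Nat.card (Subgroup (G ⧸ J)) := Nat.card_congr e
    _ ≤ Nat.card (Set (G ⧸ J)) := Nat.card_le_card_of_injective _ SetLike.coe_injective
    _ = 2 ^ J.index := by
      rw [Nat.card_eq_fintype_card, Fintype.card_set, index_eq_card, Nat.card_eq_fintype_card]

theorem stmt3_general (S : Type*) [Group S] [Finite S] [IsSimpleGroup S]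
    (hnonab : ∃ a b : S, a * b ≠ b * a)
    (ι : Type*) [TopologicalSpace S]
    (n m : ℕ) (H : Subgroup (ι → S)) (hopen : IsOpen (H : Set (ι → S)))
    (hindex : H.index ≤ m) :
    (cyclicKernels H n).Finite ∧ Nat.card (cyclicKernels H n) ≤ 2 ^ Nat.factorial m := by
  obtain ⟨F, hF⟩ := exists_finset_pi_bot_le_of_isOpen hopen
  have : H.FiniteIndex := finiteIndex_of_le hF
  set C := H.normalCore
  obtain ⟨A, hA⟩ : ∃ A : Set ι, C = pi A fun _ => ⊥ :=
    ⟨_, eq_pi_bot_of_pi_bot_le (IsSimpleGroup.center_eq_bot_of_not_comm hnonab)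
      (normal_le_normalCore.mpr hF)⟩
  have hJ : cyclicKernels H n ⊆ {N | C.subgroupOf H ≤ N} := by
    rintro N ⟨-, f, -, rfl⟩
    rw [Set.mem_ofPred_eq, hA]
    exact (pi_bot_subgroupOf_le_commutator (IsSimpleGroup.commutator_eq_top_of_not_comm hnonab)
      (hA ▸ normalCore_le H)).trans (Abelianization.commutator_subset_ker f)
  have hJindex : (C.subgroupOf H).index ≤ m.factorial := calc
    _ ≤ C.index := Nat.le_of_dvd (Nat.pos_of_ne_zero FiniteIndex.index_ne_zero)
        (relIndex_dvd_index_of_le (normalCore_le H))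
    _ ≤ H.index.factorial := H.index_normalCore_le_factorial
    _ ≤ m.factorial := Nat.factorial_le hindex
  obtain ⟨hfin, hcard⟩ := (C.subgroupOf H).finite_setOf_le_and_card_le
  exact ⟨hfin.subset hJ,
    (Nat.card_mono hfin hJ).trans (hcard.trans (Nat.pow_le_pow_right two_pos hJindex))⟩

/-- For a non-abelian finite simple group `S` and an infinite index set `ι`, in `G = S^ι` every
open subgroup `H` of index at most `m` has at most `2^(m!)` closed normal subgroups with cyclic
quotient of order `n`; in particular this number is finite, uniformly in `m`. -/
theorem stmt3 (S : Type*) [Group S] [Finite S] [IsSimpleGroup S]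
    (hnonab : ∃ a b : S, a * b ≠ b * a)
    (ι : Type*) [Infinite ι] [TopologicalSpace S] [DiscreteTopology S]
    (n m : ℕ) (H : Subgroup (ι → S)) (hopen : IsOpen (H : Set (ι → S)))
    (hindex : H.index ≤ m) :
    (cyclicKernels H n).Finite ∧ Nat.card (cyclicKernels H n) ≤ 2 ^ Nat.factorial m :=
  stmt3_general S hnonab ι n m H hopen hindex
end

section
/- Let G be a profinite group and n ∈ ℕ. If for every prime p dividing n the number I_G(p) of closed normal subgroups N ⊴ G with G/N cyclic of order p is finite, then I_G(n) ≤ 2^{n^s}, where s = Σ_{p|n prime} I_G(p). In particular, I_G(n) is finite. -/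
/-!
A subgroup counted by `I_G(n)` is closed of finite index, hence open, so it is the kernel of a
continuous homomorphism `G → ℤ/n`. Thus `I_G(n) ≤ |A|` for the abelian group
`A = Hom_cts(G, ℤ/n)`, whose exponent divides `n`. Evaluating a character of order dividing `p` at
one point outside each of the `I_G(p)` kernels is injective: the quotient of two characters that
agree there would be a nontrivial character of order `p` vanishing at the point chosen outside its
own kernel. Hence `|A[p]| ≤ p ^ I_G(p)`, and splitting `A` along the power maps `a ↦ a ^ p` gives
`|A| ≤ ∏_p |A[p]| ^ v_p(n) ≤ n ^ s`.
-/

open Function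

section Torsion

variable {A B : Type*} [CommGroup A] [CommGroup B]

theorem ENat.card_eq_card_ker_mul_card_range {G H : Type*} [Group G] [Group H] (f : G →* H) :
    ENat.card G = ENat.card f.ker * ENat.card f.range := by
  rw [ENat.card_congr Subgroup.groupEquivQuotientProdSubgroup, ENat.card_prod,
    ENat.card_congr (QuotientGroup.quotientKerEquivRange f).toEquiv, mul_comm]

theorem ENat.card_ker_powMonoidHom_le_of_injective {f : A →* B} (hf : Injective f) (q : ℕ) :
    ENat.card (powMonoidHom q : A →* A).ker ≤ ENat.card (powMonoidHom q : B →* B).ker :=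
  ENat.card_le_card_of_injective
    (f := fun a => ⟨f a, by rw [MonoidHom.mem_ker, powMonoidHom_apply, ← map_pow,
      ← powMonoidHom_apply, MonoidHom.mem_ker.1 a.2, map_one]⟩)
    fun a b hab => Subtype.ext (hf (congrArg Subtype.val hab))

-- Counting in `ℕ∞` makes the bound hold without finiteness hypotheses, and it then forces `A` to
-- be finite.
theorem ENat.card_le_factorization_prod_of_pow_eq_one (c : ℕ → ℕ) {m : ℕ} (hm : 0 < m)
    (hA : ∀ a : A, a ^ m = 1)
    (hc : ∀ q ∈ m.primeFactors, ENat.card (powMonoidHom q : A →* A).ker ≤ c q) :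
    ENat.card A ≤ (m.factorization.prod fun q e => c q ^ e : ℕ) := by
  induction m using Nat.recOnMul generalizing A with
  | zero => exact absurd hm (lt_irrefl 0)
  | one =>
    have : Subsingleton A := ⟨fun a b => by rw [← pow_one a, hA, ← pow_one b, hA]⟩
    rw [Nat.factorization_one, Finsupp.prod_zero_index, Nat.cast_one]
    exact (ENat.card_le_one_iff_subsingleton A).mpr this
  | prime p hp =>
    have hker : ENat.card A ≤ ENat.card (powMonoidHom p : A →* A).ker :=
      ENat.card_le_card_of_injective (f := fun a => ⟨a, hA a⟩) fun a b h => congrArg Subtype.val h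
    simpa [hp.factorization] using hker.trans (hc p (by simp [hp.primeFactors]))
  | mul a b iha ihb =>
    have ha : a ≠ 0 := left_ne_zero_of_mul hm.ne'
    have hb : b ≠ 0 := right_ne_zero_of_mul hm.ne'
    let φ : A →* A := powMonoidHom b
    have hker : ENat.card φ.ker ≤ (b.factorization.prod fun q e => c q ^ e : ℕ) := by
      refine ihb hb.bot_lt (fun x => Subtype.ext (MonoidHom.mem_ker.1 x.2)) fun q hq => ?_
      exact (ENat.card_ker_powMonoidHom_le_of_injective φ.ker.subtype_injective q).trans
        (hc q (Nat.primeFactors_mono (dvd_mul_left b a) hm.ne' hq))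
    have hrange : ENat.card φ.range ≤ (a.factorization.prod fun q e => c q ^ e : ℕ) := by
      refine iha ha.bot_lt (fun ⟨_, x, hx⟩ => Subtype.ext ?_) fun q hq => ?_
      · simp only [← hx, φ, powMonoidHom_apply, Subgroup.coe_pow, ← pow_mul, mul_comm b a, hA,
          OneMemClass.coe_one]
      · exact (ENat.card_ker_powMonoidHom_le_of_injective φ.range.subtype_injective q).trans
          (hc q (Nat.primeFactors_mono (dvd_mul_right a b) hm.ne' hq))
    rw [ENat.card_eq_card_ker_mul_card_range φ, Nat.factorization_mul ha hb,
      Finsupp.prod_add_index' (fun _ => pow_zero _) (fun _ _ _ => pow_add _ _ _), Nat.cast_mul]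
    exact (mul_le_mul' hker hrange).trans_eq (mul_comm _ _)

end Torsion

theorem Nat.factorization_prod_pow_pow_le (k : ℕ → ℕ) {n : ℕ} (hn : n ≠ 0) :
    (n.factorization.prod fun q e => (q ^ k q) ^ e) ≤ n ^ ∑ q ∈ n.primeFactors, k q := by
  rw [Finsupp.prod, Nat.support_factorization, ← Finset.prod_pow_eq_pow_sum]
  refine Finset.prod_le_prod' fun q _ => ?_
  rw [← pow_mul, mul_comm, pow_mul]
  exact Nat.pow_le_pow_left (Nat.le_of_dvd (Nat.pos_of_ne_zero hn) (Nat.ordProj_dvd n q)) _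

theorem MonoidHom.continuous_of_isOpen_ker {G H : Type*} [Group G] [TopologicalSpace G]
    [IsTopologicalGroup G] [Group H] [TopologicalSpace H] [DiscreteTopology H] (f : G →* H)
    (hf : IsOpen (f.ker : Set G)) : Continuous f := by
  refine continuous_of_continuousAt_one f ?_
  rw [ContinuousAt, map_one, nhds_discrete H, Filter.tendsto_pure]
  exact hf.mem_nhds f.ker.one_mem

section CyclicKernels

variable {G : Type*} [Group G] [TopologicalSpace G]

theorem mem_cyclicKernels_of_isCyclic_range {H : Type*} [Group H] {n : ℕ} (f : G →* H)
    (hf : IsClosed (f.ker : Set G)) [hcyc : IsCyclic f.range] (hcard : Nat.card f.range = n) :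
    f.ker ∈ cyclicKernels G n := by
  subst hcard
  let e := zmodCyclicMulEquiv hcyc
  refine ⟨hf, e.symm.toMonoidHom.comp f.rangeRestrict,
    e.symm.surjective.comp f.rangeRestrict_surjective, ?_⟩
  exact (f.rangeRestrict.ker_comp_of_injective _ e.symm.injective).trans f.ker_rangeRestrict

theorem ne_top_of_mem_cyclicKernels {n : ℕ} (hn : n ≠ 1) {N : Subgroup G}
    (hN : N ∈ cyclicKernels G n) : N ≠ ⊤ := by
  obtain ⟨-, f, hf, rfl⟩ := hN
  have : Nontrivial (ZMod n) := ZMod.nontrivial_iff.2 hn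
  obtain ⟨y, hy⟩ := exists_ne (1 : Multiplicative (ZMod n))
  obtain ⟨g, rfl⟩ := hf y
  exact fun htop => hy (f.mem_ker.1 (htop ▸ Subgroup.mem_top g))

theorem exists_continuousMonoidHom_ker_eq [IsTopologicalGroup G] {n : ℕ} [NeZero n]
    {N : Subgroup G} (hN : N ∈ cyclicKernels G n) :
    ∃ χ : G →ₜ* Multiplicative (ZMod n), (χ : G →* Multiplicative (ZMod n)).ker = N := by
  obtain ⟨hclosed, f, hf, rfl⟩ := hN
  have : f.ker.FiniteIndex := ⟨by
    rw [Subgroup.index_ker, MonoidHom.range_eq_top.2 hf, Subgroup.card_top]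
    simp [NeZero.ne n]⟩
  exact ⟨⟨f, f.continuous_of_isOpen_ker (f.ker.isOpen_of_isClosed_of_finiteIndex hclosed)⟩, rfl⟩

theorem enatCard_cyclicKernels_le [IsTopologicalGroup G] (n : ℕ) [NeZero n] :
    ENat.card (cyclicKernels G n) ≤ ENat.card (G →ₜ* Multiplicative (ZMod n)) := by
  choose χ hχ using fun N : cyclicKernels G n => exists_continuousMonoidHom_ker_eq N.2
  exact ENat.card_le_card_of_injective (f := χ) fun N N' h =>
    Subtype.ext ((hχ N).symm.trans (h ▸ hχ N'))

variable {C : Type*} [CommGroup C] [TopologicalSpace C] [IsTopologicalGroup C] [T1Space C]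
  [IsCyclic C]

theorem ContinuousMonoidHom.ker_mem_cyclicKernels {p : ℕ} (hp : p.Prime) {χ : G →ₜ* C}
    (hχp : χ ^ p = 1) (hχ : χ ≠ 1) : (χ : G →* C).ker ∈ cyclicKernels G p := by
  refine mem_cyclicKernels_of_isCyclic_range _ (isClosed_singleton.preimage χ.continuous) ?_
  have hdvd : Monoid.exponent (χ : G →* C).range ∣ p :=
    Monoid.exponent_dvd_of_forall_pow_eq_one fun ⟨_, g, hg⟩ => Subtype.ext <| by
      simp [← hg, ← ContinuousMonoidHom.pow_apply, hχp]
  have hne : Monoid.exponent (χ : G →* C).range ≠ 1 := by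
    rw [Ne, Monoid.exp_eq_one_iff]
    refine fun _ => hχ (ContinuousMonoidHom.ext fun g => ?_)
    exact congrArg Subtype.val (Subsingleton.elim (⟨χ g, g, rfl⟩ : (χ : G →* C).range) 1)
  rw [← IsCyclic.exponent_eq_card]
  exact ((Nat.dvd_prime hp).1 hdvd).resolve_left hne

theorem ContinuousMonoidHom.card_ker_powMonoidHom_le {p : ℕ} (hp : p.Prime) :
    ENat.card (powMonoidHom p : (G →ₜ* C) →* (G →ₜ* C)).ker ≤
      ENat.card (powMonoidHom p : C →* C).ker ^ ENat.card (cyclicKernels G p) := by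
  choose x hx using fun N : cyclicKernels G p =>
    not_forall.1 ((Subgroup.eq_top_iff' _).not.1 (ne_top_of_mem_cyclicKernels hp.ne_one N.2))
  rw [← ENat.card_fun]
  refine ENat.card_le_card_of_injective (f := fun χ N => ⟨χ.1 (x N), ?_⟩) fun χ ψ hχψ => ?_
  · have hχ : χ.1 ^ p = 1 := MonoidHom.mem_ker.1 χ.2
    rw [MonoidHom.mem_ker, powMonoidHom_apply, ← ContinuousMonoidHom.pow_apply, hχ,
      ContinuousMonoidHom.coe_one, Pi.one_apply]
  · by_contra hne
    have hdiv : χ.1 * ψ.1⁻¹ ≠ 1 := fun h => hne (Subtype.ext (mul_inv_eq_one.1 h))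
    have hdivp : (χ.1 * ψ.1⁻¹) ^ p = 1 := by
      rw [mul_pow, inv_pow, ← powMonoidHom_apply, ← powMonoidHom_apply, MonoidHom.mem_ker.1 χ.2,
        MonoidHom.mem_ker.1 ψ.2, inv_one, mul_one]
    let N : cyclicKernels G p := ⟨_, ContinuousMonoidHom.ker_mem_cyclicKernels hp hdivp hdiv⟩
    refine hx N (MonoidHom.mem_ker.2 ?_)
    have hN : χ.1 (x N) = ψ.1 (x N) := congrArg Subtype.val (congrFun hχψ N)
    change χ.1 (x N) * (ψ.1 (x N))⁻¹ = 1
    rw [hN, mul_inv_cancel]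

theorem ContinuousMonoidHom.card_ker_powMonoidHom_le_pow [Finite C] {p : ℕ} (hp : p.Prime)
    (hfin : (cyclicKernels G p).Finite) :
    ENat.card (powMonoidHom p : (G →ₜ* C) →* (G →ₜ* C)).ker ≤
      (p ^ Nat.card (cyclicKernels G p) : ℕ) := by
  have : Finite (cyclicKernels G p) := hfin.to_subtype
  have hC : ENat.card (powMonoidHom p : C →* C).ker ≤ p := by
    rw [ENat.card_eq_coe_natCard, IsCyclic.card_powMonoidHom_ker, Nat.cast_le]
    exact Nat.gcd_le_right _ hp.pos
  calc _ ≤ _ := ContinuousMonoidHom.card_ker_powMonoidHom_le hp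
    _ ≤ (p : ℕ∞) ^ ENat.card (cyclicKernels G p) := ENat.epow_left_mono hC
    _ = _ := by rw [ENat.card_eq_coe_natCard, ENat.epow_natCast, Nat.cast_pow]

end CyclicKernels

theorem stmt5_general (G : Type*) [Group G] [TopologicalSpace G] [IsTopologicalGroup G]
    (n : ℕ) (hn : 0 < n) (hfin : ∀ p : ℕ, p.Prime → p ∣ n → (cyclicKernels G p).Finite) :
    (cyclicKernels G n).Finite ∧
      Nat.card (cyclicKernels G n) ≤
        2 ^ n ^ (∑ p ∈ n.primeFactors, Nat.card (cyclicKernels G p)) := by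
  have : NeZero n := ⟨hn.ne'⟩
  have hexp (χ : G →ₜ* Multiplicative (ZMod n)) : χ ^ n = 1 :=
    ContinuousMonoidHom.ext fun g => by
      simpa [ContinuousMonoidHom.pow_apply] using pow_card_eq_one' (x := χ g)
  have hbound : ENat.card (cyclicKernels G n) ≤
      (2 ^ n ^ (∑ p ∈ n.primeFactors, Nat.card (cyclicKernels G p)) : ℕ) :=
    calc ENat.card (cyclicKernels G n)
        ≤ ENat.card (G →ₜ* Multiplicative (ZMod n)) := enatCard_cyclicKernels_le n
      _ ≤ (n.factorization.prod fun q e => (q ^ Nat.card (cyclicKernels G q)) ^ e : ℕ) :=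
        ENat.card_le_factorization_prod_of_pow_eq_one _ hn hexp fun q hq =>
          ContinuousMonoidHom.card_ker_powMonoidHom_le_pow (Nat.prime_of_mem_primeFactors hq)
            (hfin q (Nat.prime_of_mem_primeFactors hq) (Nat.dvd_of_mem_primeFactors hq))
      _ ≤ (n ^ ∑ p ∈ n.primeFactors, Nat.card (cyclicKernels G p) : ℕ) :=
        Nat.cast_le.2 (Nat.factorization_prod_pow_pow_le _ hn.ne')
      _ ≤ _ := Nat.cast_le.2 Nat.lt_two_pow_self.le
  have : Finite (cyclicKernels G n) := ENat.card_lt_top.1 (hbound.trans_lt (ENat.natCast_lt_top _))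
  refine ⟨Set.finite_coe_iff.1 this, ?_⟩
  rwa [ENat.card_eq_coe_natCard, Nat.cast_le] at hbound

/-- If, for every prime `p` dividing `n`, the number `I_G(p)` of closed normal subgroups of the
profinite group `G` with cyclic quotient of order `p` is finite, then
`I_G(n) ≤ 2 ^ (n ^ s)` where `s = ∑_{p ∣ n prime} I_G(p)`; in particular `I_G(n)` is finite. -/
theorem stmt5 (G : Type*) [Group G] [TopologicalSpace G] [IsTopologicalGroup G]
    [CompactSpace G] [T2Space G] [TotallyDisconnectedSpace G]
    (n : ℕ) (hn : 0 < n) (hfin : ∀ p : ℕ, p.Prime → p ∣ n → (cyclicKernels G p).Finite) :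
    (cyclicKernels G n).Finite ∧
      Nat.card (cyclicKernels G n) ≤
        2 ^ n ^ (∑ p ∈ n.primeFactors, Nat.card (cyclicKernels G p)) :=
  stmt5_general G n hn hfin
end

section
/- Let G be a profinite group such that for every prime p, G has a basis of neighborhoods of the identity consisting of open normal subgroups U with finite p-rank r_p(U). Then every open subgroup H of G has finite p-rank for every prime p, and consequently I_H(n) is finite for every open subgroup H ≤ G and every n ∈ ℕ. -/
/-- `M_p(G)`, the intersection of all closed normal subgroups of `G` with quotient cyclic of
order `p`.  The `p`-rank of `G` is finite exactly when `M_p(G)` has finite index. -/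
def Mp (G : Type*) [Group G] [TopologicalSpace G] (p : ℕ) : Subgroup G :=
  sInf (cyclicKernels G p)

/-!
Finiteness of `I_H(n)` is proved by induction on `n`. Writing `n = p m` with `p` prime, two
continuous homomorphisms `H → ℤ/n` inducing the same map to `ℤ/m` differ by a continuous
homomorphism of exponent `p`; such a homomorphism kills `M_p(H)`, so factors through the finite
group `H / M_p(H)`, and there are only finitely many of them.

Finiteness of the `p`-rank of `H` comes from an open normal `U ≤ H` of finite `p`-rank: the
inclusion `U → H` carries `M_p(U)` into `M_p(H)`, and `M_p(U)` has finite index in `G`.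
-/

lemma ZMod.nsmul_eq_zero_of_castHom_eq_zero {p m : ℕ} [NeZero (p * m)] {a : ZMod (p * m)}
    (ha : ZMod.castHom (dvd_mul_left m p) (ZMod m) a = 0) : p • a = 0 := by
  obtain ⟨k, rfl⟩ := ZMod.natCast_zmod_surjective a
  rw [map_natCast, ZMod.natCast_eq_zero_iff] at ha
  rw [nsmul_eq_mul, ← Nat.cast_mul, ZMod.natCast_eq_zero_iff]
  exact mul_dvd_mul_left p ha

section

variable {Γ : Type*} [Group Γ]

lemma card_range_dvd_of_forall_pow_eq_one {A : Type*} [Group A] [IsCyclic A] {p : ℕ}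
    {δ : Γ →* A} (hδ : ∀ x, δ x ^ p = 1) : Nat.card δ.range ∣ p := by
  rw [← IsCyclic.exponent_eq_card]
  exact Monoid.exponent_dvd_of_forall_pow_eq_one fun ⟨_, x, rfl⟩ => Subtype.ext (hδ x)

lemma finite_setOf_le_ker {A : Type*} [Group A] [Finite A] {K : Subgroup Γ}
    (hK : K.index ≠ 0) : {f : Γ →* A | K ≤ f.ker}.Finite := by
  have : K.FiniteIndex := ⟨hK⟩
  refine Set.Finite.of_finite_image (f := fun (f : Γ →* A) (q : Γ ⧸ K) => f q.out)
    (Set.toFinite _) fun f hf g hg hfg => ?_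
  ext x
  have key : ∀ ρ : Γ →* A, K ≤ ρ.ker → ρ x = ρ (QuotientGroup.mk x : Γ ⧸ K).out := fun ρ hρ =>
    ρ.eq_iff.2 (hρ (QuotientGroup.eq.1 (QuotientGroup.out_eq' _)))
  rw [key f hf, key g hg]
  exact congrFun hfg (QuotientGroup.mk x)

variable [TopologicalSpace Γ]

lemma Mp_le_ker {A : Type*} [Group A] {p : ℕ} (hp : p.Prime) {δ : Γ →* A}
    (hδ : IsClosed (δ.ker : Set Γ)) (hcard : Nat.card δ.range ∣ p) : Mp Γ p ≤ δ.ker := by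
  rcases hp.eq_one_or_self_of_dvd _ hcard with h1 | hP
  · rw [Subgroup.card_eq_one, MonoidHom.range_eq_bot_iff] at h1
    simp [h1]
  · have : Fact p.Prime := ⟨hp⟩
    let e : δ.range ≃* Multiplicative (ZMod p) :=
      mulEquivOfPrimeCardEq hP (by simp)
    refine sInf_le ⟨hδ, (e : δ.range →* Multiplicative (ZMod p)).comp δ.rangeRestrict,
      e.surjective.comp δ.rangeRestrict_surjective, ?_⟩
    rw [MonoidHom.ker_mulEquiv_comp, MonoidHom.ker_rangeRestrict]

lemma Mp_le_comap {Δ : Type*} [Group Δ] [TopologicalSpace Δ] {p : ℕ} (hp : p.Prime)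
    {φ : Γ →* Δ} (hφ : Continuous φ) : Mp Γ p ≤ (Mp Δ p).comap φ := by
  intro x hx
  rw [Subgroup.mem_comap, Mp, Subgroup.mem_sInf]
  rintro _ ⟨hN, f, -, rfl⟩
  have hcl : IsClosed ((f.comp φ).ker : Set Γ) := by
    rw [← MonoidHom.comap_ker]; exact hN.preimage hφ
  have hcard : Nat.card (f.comp φ).range ∣ p := by
    have : NeZero p := ⟨hp.ne_zero⟩
    simpa using Subgroup.card_subgroup_dvd_card (f.comp φ).range
  exact Mp_le_ker hp hcl hcard hx

variable [IsTopologicalGroup Γ]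

lemma finite_fiber_of_isOpen_ker {A B : Type*} [CommGroup A] [Finite A] [IsCyclic A] [Group B]
    {p : ℕ} (hp : p.Prime) (hMp : (Mp Γ p).index ≠ 0) {ψ : A →* B}
    (hψ : ∀ a, ψ a = 1 → a ^ p = 1) (g : Γ →* B) :
    {f : Γ →* A | IsOpen (f.ker : Set Γ) ∧ ψ.comp f = g}.Finite := by
  rcases Set.eq_empty_or_nonempty {f : Γ →* A | IsOpen (f.ker : Set Γ) ∧ ψ.comp f = g} with
    he | ⟨f₀, hf₀, hf₀g⟩
  · simp [he]
  refine Set.Finite.of_finite_image ((finite_setOf_le_ker hMp).subset ?_)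
    (div_left_injective (b := f₀)).injOn
  rintro _ ⟨f, ⟨hf, hfg⟩, rfl⟩
  have hopen : IsOpen ((f / f₀).ker : Set Γ) := by
    refine Subgroup.isOpen_mono (H₁ := f.ker ⊓ f₀.ker) (fun x hx => ?_) (hf.inter hf₀)
    simp [MonoidHom.mem_ker.1 hx.1, MonoidHom.mem_ker.1 hx.2]
  have hpow : ∀ x, (f / f₀) x ^ p = 1 := fun x => hψ _ <| by
    rw [MonoidHom.div_apply, map_div, ← MonoidHom.comp_apply, ← MonoidHom.comp_apply, hfg,
      hf₀g, div_self']
  exact Mp_le_ker hp (Subgroup.isClosed_of_isOpen _ hopen)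
    (card_range_dvd_of_forall_pow_eq_one hpow)

lemma finite_setOf_isOpen_ker (hMp : ∀ p : ℕ, p.Prime → (Mp Γ p).index ≠ 0) {n : ℕ}
    (hn : n ≠ 0) : {f : Γ →* Multiplicative (ZMod n) | IsOpen (f.ker : Set Γ)}.Finite := by
  induction n using Nat.strong_induction_on with
  | _ n ih =>
  rcases eq_or_ne n 1 with rfl | hn1
  · have : Subsingleton (Γ →* Multiplicative (ZMod 1)) :=
      ⟨fun f g => MonoidHom.ext fun _ => Subsingleton.elim _ _⟩
    exact Set.subsingleton_of_subsingleton.finite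
  obtain ⟨p, hp, m, rfl⟩ := Nat.exists_prime_and_dvd hn1
  have hm : m ≠ 0 := right_ne_zero_of_mul hn
  have : NeZero (p * m) := ⟨hn⟩
  let ψ : Multiplicative (ZMod (p * m)) →* Multiplicative (ZMod m) :=
    (ZMod.castHom (dvd_mul_left m p) (ZMod m)).toAddMonoidHom.toMultiplicative
  refine ((ih m (lt_mul_left (Nat.pos_of_ne_zero hm) hp.one_lt) hm).biUnion
    fun g _ => finite_fiber_of_isOpen_ker hp (hMp p hp) (ψ := ψ) ?_ g).subset ?_
  · exact fun a ha => ZMod.nsmul_eq_zero_of_castHom_eq_zero ha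
  · exact fun f hf => Set.mem_biUnion (x := ψ.comp f)
      (Subgroup.isOpen_mono (fun x hx => by simp [MonoidHom.mem_ker.1 hx]) hf) ⟨hf, rfl⟩

lemma finite_cyclicKernels (hMp : ∀ p : ℕ, p.Prime → (Mp Γ p).index ≠ 0) {n : ℕ}
    (hn : n ≠ 0) : (cyclicKernels Γ n).Finite := by
  have : NeZero n := ⟨hn⟩
  refine ((finite_setOf_isOpen_ker hMp hn).image MonoidHom.ker).subset ?_
  rintro _ ⟨hN, f, -, rfl⟩
  have : f.ker.FiniteIndex := ⟨by rw [Subgroup.index_ker]; exact Nat.card_pos.ne'⟩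
  exact ⟨f, Subgroup.isOpen_of_isClosed_of_finiteIndex _ hN, rfl⟩

end

lemma Mp_index_ne_zero_of_le {G : Type*} [Group G] [TopologicalSpace G] {p : ℕ}
    (hp : p.Prime) {U H : Subgroup G} (hUH : U ≤ H) (hU : U.index ≠ 0)
    (hMpU : (Mp U p).index ≠ 0) : (Mp H p).index ≠ 0 := by
  have hle : (Mp U p).map U.subtype ≤ (Mp H p).map H.subtype := by
    rintro _ ⟨x, hx, rfl⟩
    exact ⟨Subgroup.inclusion hUH x,
      Mp_le_comap hp (continuous_subtype_val.subtype_mk _) hx, rfl⟩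
  have hindex := Subgroup.index_dvd_of_le hle
  rw [Subgroup.index_map_subtype, Subgroup.index_map_subtype] at hindex
  exact left_ne_zero_of_mul (ne_zero_of_dvd_ne_zero (mul_ne_zero hMpU hU) hindex)

theorem stmt7_general (G : Type*) [Group G] [TopologicalSpace G] [IsTopologicalGroup G]
    [CompactSpace G]
    (hbasis : ∀ p : ℕ, p.Prime → ∀ W ∈ nhds (1 : G), ∃ U : Subgroup G,
      U.Normal ∧ IsOpen (U : Set G) ∧ (U : Set G) ⊆ W ∧ (Mp U p).index ≠ 0) :
    ∀ H : Subgroup G, IsOpen (H : Set G) →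
      (∀ p : ℕ, p.Prime → (Mp H p).index ≠ 0) ∧
        ∀ n : ℕ, 0 < n → (cyclicKernels H n).Finite := by
  intro H hH
  have hrank : ∀ p : ℕ, p.Prime → (Mp H p).index ≠ 0 := fun p hp => by
    obtain ⟨U, -, hUo, hUH, hMpU⟩ := hbasis p hp H (hH.mem_nhds H.one_mem)
    have := Subgroup.quotient_finite_of_isOpen U hUo
    exact Mp_index_ne_zero_of_le hp hUH U.index_ne_zero_of_finite hMpU
  exact ⟨hrank, fun n hn => finite_cyclicKernels hrank hn.ne'⟩

/-- If for every prime `p` the profinite group `G` has a basis of neighborhoods of `1`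
consisting of open normal subgroups of finite `p`-rank, then every open subgroup `H` of `G`
has finite `p`-rank for all primes `p`, and consequently `I_H(n)` is finite for all `n`. -/
theorem stmt7 (G : Type*) [Group G] [TopologicalSpace G] [IsTopologicalGroup G]
    [CompactSpace G] [T2Space G] [TotallyDisconnectedSpace G]
    (hbasis : ∀ p : ℕ, p.Prime → ∀ W ∈ nhds (1 : G), ∃ U : Subgroup G,
      U.Normal ∧ IsOpen (U : Set G) ∧ (U : Set G) ⊆ W ∧ (Mp U p).index ≠ 0) :
    ∀ H : Subgroup G, IsOpen (H : Set G) →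
      (∀ p : ℕ, p.Prime → (Mp H p).index ≠ 0) ∧
        ∀ n : ℕ, 0 < n → (cyclicKernels H n).Finite :=
  stmt7_general G hbasis
end

section
/- Any product G = ∏_{i∈I} G_i of finite perfect groups (with the product topology) satisfies: for every open subgroup H ≤ G and every n ∈ ℕ, H has only finitely many closed normal subgroups N with H/N cyclic of order n. -/
open Filter Topology

namespace Subgroup

variable {Γ : Type*} [Group Γ]

theorem le_of_image_mk_subset {K N₁ N₂ : Subgroup Γ} (hK : K ≤ N₂)
    (h : (QuotientGroup.mk '' N₁ : Set (Γ ⧸ K)) ⊆ QuotientGroup.mk '' N₂) : N₁ ≤ N₂ := by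
  intro x hx
  obtain ⟨y, hy, hyx⟩ := h ⟨x, hx, rfl⟩
  simpa using N₂.mul_mem hy (hK (QuotientGroup.eq.1 hyx))

theorem finite_setOf_le (K : Subgroup Γ) [K.FiniteIndex] : {N : Subgroup Γ | K ≤ N}.Finite :=
  Set.Finite.of_finite_image (f := fun N : Subgroup Γ => (QuotientGroup.mk '' N : Set (Γ ⧸ K)))
    (Set.toFinite _) fun _ h₁ _ h₂ h =>
      le_antisymm (le_of_image_mk_subset h₂ h.le) (le_of_image_mk_subset h₁ h.ge)

end Subgroup

section Pi

variable {ι : Type*} {G : ι → Type*}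

theorem tendsto_finset_piecewise_one [∀ i, One (G i)] [∀ i, TopologicalSpace (G i)]
    [DecidableEq ι] (x : ∀ i, G i) :
    Tendsto (fun S : Finset ι => S.piecewise x 1) atTop (𝓝 x) := by
  refine tendsto_pi_nhds.2 fun i => tendsto_const_nhds.congr' ?_
  filter_upwards [eventually_ge_atTop {i}] with S hS
  rw [S.piecewise_eq_of_mem _ _ (Finset.singleton_subset_iff.1 hS)]

variable [∀ i, Group (G i)]

theorem Subgroup.finiteIndex_pi_bot [∀ i, Finite (G i)] (J : Finset ι) :
    (Subgroup.pi (J : Set ι) fun i => (⊥ : Subgroup (G i))).FiniteIndex := by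
  have hker : (Subgroup.pi (J : Set ι) fun i => (⊥ : Subgroup (G i))) =
      (MonoidHom.pi fun j : J => Pi.evalMonoidHom G j).ker := by
    ext x
    simp [funext_iff, Subgroup.mem_pi]
  rw [hker]
  exact Subgroup.finiteIndex_ker _

theorem exists_pi_bot_le_of_isOpen [∀ i, TopologicalSpace (G i)] {H : Subgroup (∀ i, G i)}
    (hH : IsOpen (H : Set (∀ i, G i))) :
    ∃ J : Finset ι, Subgroup.pi (J : Set ι) (fun _ => ⊥) ≤ H := by
  obtain ⟨J, u, hu, hJu⟩ := isOpen_pi_iff.1 hH 1 H.one_mem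
  refine ⟨J, fun x hx => hJu fun i hi => ?_⟩
  rw [Subgroup.mem_bot.1 (hx i hi)]
  exact (hu i hi).2

theorem mulSingle_mem_ker_of_commutator_eq_top [DecidableEq ι] {A : Type*} [CommGroup A]
    {H : Subgroup (∀ i, G i)} (f : H →* A) {i : ι} (hperf : commutator (G i) = ⊤)
    (hi : ∀ g, Pi.mulSingle i g ∈ H) (g : G i) : (⟨Pi.mulSingle i g, hi g⟩ : H) ∈ f.ker := by
  let φ : G i →* A := f.comp ((MonoidHom.mulSingle G i).codRestrict H hi)
  exact Abelianization.commutator_subset_ker φ (hperf ▸ Subgroup.mem_top g)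

theorem pi_bot_subgroupOf_le_ker [∀ i, TopologicalSpace (G i)]
    (hperf : ∀ i, commutator (G i) = ⊤) {H : Subgroup (∀ i, G i)} {J : Finset ι}
    (hJ : Subgroup.pi (J : Set ι) (fun _ => ⊥) ≤ H) {A : Type*} [CommGroup A] (f : H →* A)
    (hf : IsClosed (f.ker : Set H)) :
    (Subgroup.pi (J : Set ι) fun _ => ⊥).subgroupOf H ≤ f.ker := by
  classical
  intro x hx
  rw [Subgroup.mem_subgroupOf] at hx
  obtain ⟨C, hC, hCf⟩ := isClosed_induced_iff.1 hf
  have hker_iff : ∀ y : H, y ∈ f.ker ↔ (y : ∀ i, G i) ∈ C := fun y => (Set.ext_iff.1 hCf y).symm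
  have hsingle : ∀ i, Pi.mulSingle i ((x : ∀ i, G i) i) ∈ f.ker.map H.subtype := by
    intro i
    by_cases hiJ : i ∈ J
    · rw [Subgroup.mem_bot.1 (hx i hiJ), Pi.mulSingle_one]
      exact one_mem _
    · have hi : ∀ g, Pi.mulSingle i g ∈ H := fun g =>
        hJ fun j hj => Subgroup.mem_bot.2 (Pi.mulSingle_eq_of_ne (by rintro rfl; exact hiJ hj) g)
      exact ⟨_, mulSingle_mem_ker_of_commutator_eq_top f (hperf i) hi _, rfl⟩
  have htrunc : ∀ S : Finset ι, S.piecewise (x : ∀ i, G i) 1 ∈ C := by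
    intro S
    have : S.piecewise (x : ∀ i, G i) 1 ∈ f.ker.map H.subtype :=
      Submonoid.pi_mem_of_mulSingle_mem_aux S _
        (fun i hi => S.piecewise_eq_of_notMem _ _ hi)
        (fun i hi => by rw [S.piecewise_eq_of_mem _ _ hi]; exact hsingle i)
    obtain ⟨y, hy, hyx⟩ := this
    exact hyx ▸ (hker_iff y).1 hy
  have hxC : (x : ∀ i, G i) ∈ C :=
    hC.mem_of_tendsto (tendsto_finset_piecewise_one _) (Eventually.of_forall htrunc)
  exact (hker_iff x).2 hxC

end Pi

theorem stmt8_general (ι : Type*) (G : ι → Type*) [∀ i, Group (G i)] [∀ i, Finite (G i)]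
    [∀ i, TopologicalSpace (G i)]
    (hperf : ∀ i, commutator (G i) = ⊤)
    (H : Subgroup (∀ i, G i)) (hopen : IsOpen (H : Set (∀ i, G i))) (n : ℕ) :
    (cyclicKernels H n).Finite := by
  obtain ⟨J, hJ⟩ := exists_pi_bot_le_of_isOpen hopen
  have := Subgroup.finiteIndex_pi_bot (G := G) J
  refine (Subgroup.finite_setOf_le ((Subgroup.pi (J : Set ι) fun _ => ⊥).subgroupOf H)).subset ?_
  rintro N ⟨hN, f, -, rfl⟩
  exact pi_bot_subgroupOf_le_ker hperf hJ f hN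

/-- In a product `G = ∏ᵢ Gᵢ` of finite perfect groups (with the product topology), every open
subgroup `H` has only finitely many closed normal subgroups with cyclic quotient of order `n`. -/
theorem stmt8 (ι : Type*) (G : ι → Type*) [∀ i, Group (G i)] [∀ i, Finite (G i)]
    [∀ i, TopologicalSpace (G i)] [∀ i, DiscreteTopology (G i)]
    (hperf : ∀ i, commutator (G i) = ⊤)
    (H : Subgroup (∀ i, G i)) (hopen : IsOpen (H : Set (∀ i, G i))) (n : ℕ) (hn : 0 < n) :
    (cyclicKernels H n).Finite :=
  stmt8_general ι G hperf H hopen n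
end

section
/- Let (F,v) be a henselian valued field with residue field of characteristic 0 containing all roots of unity, and value group Γ. If [Γ : pΓ] = ∞ for some prime p, then F^×/(F^×)^p is infinite, and consequently F satisfies neither (F1) (finitely many extensions of each degree) nor (F2) (finiteness of E^×/(E^×)^n for all finite extensions E and all n). -/
/-- Property (F1) for a field `K` : for every `n`, `K` has only finitely many extensions of
degree `n` inside a fixed algebraic closure. -/
def CondF1 (K : Type*) [Field K] : Prop :=
  ∀ n : ℕ, {E : IntermediateField K (AlgebraicClosure K) |
    FiniteDimensional K E ∧ Module.finrank K E = n}.Finite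

/-- Property (F2) for a field `K` : for every `n ≥ 1` and every finite extension `E` of `K`
(inside a fixed algebraic closure), `Eˣ/(Eˣ)ⁿ` is finite. -/
def CondF2 (K : Type*) [Field K] : Prop :=
  ∀ n : ℕ, 0 < n → ∀ E : IntermediateField K (AlgebraicClosure K), FiniteDimensional K E →
    Finite (Eˣ ⧸ (powMonoidHom n : Eˣ →* Eˣ).range)

/-! The valuation maps `Fˣ` onto `Γ`, so `Fˣ/(Fˣ)ᵖ` surjects onto `Γ/pΓ` and is infinite.
Since `F` contains a primitive `p`-th root of unity, Kummer theory bounds the fibres of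
`a ↦ F(ᵖ√a)`: if `ᵖ√b ∈ F(ᵖ√a)` then `b ∈ aʲ (Fˣ)ᵖ`, so each of these fields, all of degree at
most `p`, comes from at most `p` classes of `Fˣ/(Fˣ)ᵖ`. Hence there are infinitely many of them,
contradicting (F1); (F2) fails already for `E = F`. -/

open IntermediateField Polynomial

theorem QuotientGroup.infinite_quotient_powMonoidHom_range_of_surjective {G H : Type*}
    [CommGroup G] [CommGroup H] {φ : G →* H} (hφ : Function.Surjective φ) (n : ℕ)
    [Infinite (H ⧸ (powMonoidHom n : H →* H).range)] :
    Infinite (G ⧸ (powMonoidHom n : G →* G).range) := by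
  have hle : (powMonoidHom n : G →* G).range ≤ (powMonoidHom n : H →* H).range.comap φ := by
    rintro _ ⟨g, rfl⟩
    exact ⟨φ g, (map_pow φ g n).symm⟩
  exact Infinite.of_surjective _
    (QuotientGroup.map_surjective_of_surjective _ _ φ (QuotientGroup.mk_surjective.comp hφ) hle)

theorem MonoidWithZeroHom.units_map_surjective {M₀ N₀ : Type*} [GroupWithZero M₀]
    [GroupWithZero N₀] {f : M₀ →*₀ N₀} (hf : Function.Surjective f) :
    Function.Surjective (Units.map f.toMonoidHom) := by
  intro u
  obtain ⟨x, hx⟩ := hf u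
  have hx0 : x ≠ 0 := by
    rintro rfl
    exact u.ne_zero (by simp [← hx])
  exact ⟨Units.mk0 x hx0, Units.ext hx⟩

theorem IsPrimitiveRoot.exists_eq_pow_mul_of_pow_eq_pow {R : Type*} [CommRing R] [IsDomain R]
    {n : ℕ} (hn : 0 < n) {ζ x y : R} (hζ : IsPrimitiveRoot ζ n) (h : x ^ n = y ^ n) :
    ∃ i : ℕ, x = ζ ^ i * y := by
  have hx : x ∈ nthRoots n (y ^ n) := (mem_nthRoots hn).mpr h
  rw [hζ.nthRoots_eq rfl] at hx
  obtain ⟨i, -, hi⟩ := Multiset.mem_map.mp hx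
  exact ⟨i, hi.symm⟩

theorem IsGalois.mem_bot_of_fixed_of_prime_card {F L : Type*} [Field F] [Field L]
    [Algebra F L] [IsGalois F L] [FiniteDimensional F L] (hcard : (Nat.card Gal(L/F)).Prime)
    {σ : Gal(L/F)} (hσ : σ ≠ 1) {x : L} (hx : σ x = x) : x ∈ (⊥ : IntermediateField F L) := by
  have := Fact.mk hcard
  have hstab : Subgroup.zpowers σ ≤ MulAction.stabilizer Gal(L/F) x :=
    Subgroup.zpowers_le.mpr hx
  exact (IsGalois.mem_bot_iff_fixed x).mpr fun τ => hstab (mem_zpowers_of_prime_card rfl hσ)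

theorem minpoly_eq_X_pow_sub_C {F A : Type*} [Field F] [Field A] [Algebra F A] {n : ℕ}
    {a : F} (H : Irreducible (X ^ n - C a)) {α : A} (hα : α ^ n = algebraMap F A a) :
    minpoly F α = X ^ n - C a :=
  (minpoly.eq_of_irreducible_of_monic H (by simp [hα])
    (monic_X_pow_sub_C a (ne_zero_of_irreducible_X_pow_sub_C H))).symm

theorem isIntegral_of_pow_eq_algebraMap {F A : Type*} [Field F] [Field A] [Algebra F A] {n : ℕ}
    (hn : 0 < n) {a : F} {α : A} (hα : α ^ n = algebraMap F A a) : IsIntegral F α :=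
  IsIntegral.of_pow hn (hα ▸ isIntegral_algebraMap)

theorem finrank_adjoin_le_of_pow_eq_algebraMap {F A : Type*} [Field F] [Field A] [Algebra F A]
    {n : ℕ} (hn : 0 < n) {a : F} {α : A} (hα : α ^ n = algebraMap F A a) :
    Module.finrank F F⟮α⟯ ≤ n := by
  rw [adjoin.finrank (isIntegral_of_pow_eq_algebraMap hn hα)]
  calc (minpoly F α).natDegree ≤ (X ^ n - C a).natDegree :=
        natDegree_le_of_dvd (minpoly.dvd F α (by simp [hα])) (X_pow_sub_C_ne_zero hn a)
    _ = n := natDegree_X_pow_sub_C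

theorem exists_eq_algebraMap_mul_pow_of_pow_eq_algebraMap {F : Type*} [Field F] {p : ℕ}
    (hp : p.Prime) {ζ : F} (hζ : IsPrimitiveRoot ζ p) {a : F} (H : Irreducible (X ^ p - C a))
    {L : Type*} [Field L] [Algebra F L] [IsSplittingField F L (X ^ p - C a)] {α β : L}
    (hα : α ^ p = algebraMap F L a) (hα0 : α ≠ 0) {b : F} (hβ : β ^ p = algebraMap F L b) :
    ∃ (j : ℕ) (d : F), β = algebraMap F L d * α ^ j := by
  have : NeZero p := ⟨hp.ne_zero⟩
  have : Fact (1 < p) := ⟨hp.one_lt⟩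
  have hK : (primitiveRoots p F).Nonempty := ⟨ζ, (mem_primitiveRoots hp.pos).mpr hζ⟩
  have : IsGalois F L := isGalois_of_isSplittingField_X_pow_sub_C hK H L
  have : FiniteDimensional F L := IsSplittingField.finiteDimensional L (X ^ p - C a)
  have hcard : Nat.card Gal(L/F) = p := by
    rw [IsGalois.card_aut_eq_finrank, finrank_of_isSplittingField_X_pow_sub_C hK H L]
  set σ : Gal(L/F) := (autEquivZmod H L hζ).symm (Multiplicative.ofAdd 1)
  have hσ1 : σ ≠ 1 := by simp [σ]
  have hσα : σ α = algebraMap F L ζ * α := by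
    simpa [Algebra.smul_def] using autEquivZmod_symm_apply_natCast H L hα hζ 1
  have hζL : IsPrimitiveRoot (algebraMap F L ζ) p :=
    hζ.map_of_injective (algebraMap F L).injective
  -- `σ β / β` is a `p`-th root of unity, so `β / αʲ` is fixed by the generator `σ`.
  obtain ⟨j, hj⟩ := hζL.exists_eq_pow_mul_of_pow_eq_pow hp.pos
    (show (σ β) ^ p = β ^ p by rw [← map_pow, hβ, AlgEquiv.commutes])
  have hζj : algebraMap F L ζ ^ j ≠ 0 := pow_ne_zero _ (hζL.ne_zero hp.ne_zero)
  have hfixed : σ (β / α ^ j) = β / α ^ j := by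
    rw [map_div₀, map_pow, hσα, hj, mul_pow, mul_div_mul_left _ _ hζj]
  obtain ⟨d, hd⟩ := mem_bot.mp
    (IsGalois.mem_bot_of_fixed_of_prime_card (hcard ▸ hp) hσ1 hfixed)
  exact ⟨j, d, by rw [hd, div_mul_cancel₀ _ (pow_ne_zero _ hα0)]⟩

theorem isSplittingField_adjoin_X_pow_sub_C {F A : Type*} [Field F] [Field A] [Algebra F A]
    {p : ℕ} {ζ : F} {a : F} (hζ : IsPrimitiveRoot ζ p) (H : Irreducible (X ^ p - C a))
    {α : A} (hα : α ^ p = algebraMap F A a) : IsSplittingField F F⟮α⟯ (X ^ p - C a) := by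
  have hp : 0 < p := Nat.pos_of_ne_zero (ne_zero_of_irreducible_X_pow_sub_C H)
  have hfinrank : Module.finrank F F⟮α⟯ = p := by
    rw [adjoin.finrank (isIntegral_of_pow_eq_algebraMap hp hα), minpoly_eq_X_pow_sub_C H hα,
      natDegree_X_pow_sub_C]
  have : FiniteDimensional F F⟮α⟯ :=
    adjoin.finiteDimensional (isIntegral_of_pow_eq_algebraMap hp hα)
  have hgen : F⟮AdjoinSimple.gen F α⟯ = ⊤ := by
    apply lift_injective
    rw [lift_adjoin_simple, AdjoinSimple.coe_gen, lift_top]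
  have hgen_pow : AdjoinSimple.gen F α ^ Module.finrank F F⟮α⟯ = algebraMap F F⟮α⟯ a := by
    ext
    simp [hfinrank, hα]
  have hK : (primitiveRoots (Module.finrank F F⟮α⟯) F).Nonempty :=
    ⟨ζ, (mem_primitiveRoots (hfinrank ▸ hp)).mpr (hfinrank ▸ hζ)⟩
  simpa [hfinrank] using isSplittingField_X_pow_sub_C_of_root_adjoin_eq_top hK hgen_pow hgen

theorem exists_eq_pow_mul_pow_of_mem_adjoin {F A : Type*} [Field F] [Field A] [Algebra F A]
    {p : ℕ} (hp : p.Prime) {ζ : F} (hζ : IsPrimitiveRoot ζ p) {a b : F} (ha : a ≠ 0) {α β : A}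
    (hα : α ^ p = algebraMap F A a) (hβ : β ^ p = algebraMap F A b) (hβα : β ∈ F⟮α⟯) :
    ∃ (j : ℕ) (d : F), b = d ^ p * a ^ j := by
  by_cases hpow : ∃ c : F, c ^ p = a
  · obtain ⟨c, rfl⟩ := hpow
    have hζA := hζ.map_of_injective (algebraMap F A).injective
    obtain ⟨i, hi⟩ := hζA.exists_eq_pow_mul_of_pow_eq_pow hp.pos (y := algebraMap F A c)
      (by rw [hα, map_pow])
    have hαF : F⟮α⟯ = ⊥ := by
      rw [adjoin_simple_eq_bot_iff, hi, ← map_pow, ← map_mul]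
      exact IntermediateField.algebraMap_mem _ _
    obtain ⟨d, rfl⟩ := mem_bot.mp (hαF ▸ hβα)
    exact ⟨0, d, (algebraMap F A).injective (by simp [hβ])⟩
  · push Not at hpow
    have H := X_pow_sub_C_irreducible_of_prime hp hpow
    have := isSplittingField_adjoin_X_pow_sub_C hζ H hα
    have hα0 : α ≠ 0 := by
      rintro rfl
      rw [zero_pow hp.ne_zero, eq_comm, map_eq_zero] at hα
      exact ha hα
    obtain ⟨j, d, hd⟩ := exists_eq_algebraMap_mul_pow_of_pow_eq_algebraMap hp hζ H
      (α := AdjoinSimple.gen F α) (β := ⟨β, hβα⟩) (by ext; simp [hα])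
      (fun h => hα0 (congrArg Subtype.val h)) (b := b) (by ext; simp [hβ])
    refine ⟨j, d, (algebraMap F A).injective ?_⟩
    have hβ' : β = algebraMap F A d * α ^ j := by simpa using congrArg Subtype.val hd
    rw [← hβ, hβ', mul_pow, ← pow_mul, mul_comm j p, pow_mul, hα]
    simp

theorem not_condF1_of_infinite_quotient_powMonoidHom_range {F : Type*} [Field F] {p : ℕ}
    (hp : p.Prime) {ζ : F} (hζ : IsPrimitiveRoot ζ p)
    (hQ : Infinite (Fˣ ⧸ (powMonoidHom p : Fˣ →* Fˣ).range)) : ¬ CondF1 F := by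
  intro hF1
  set R := (powMonoidHom p : Fˣ →* Fˣ).range
  choose rt hrt using fun a : Fˣ =>
    IsAlgClosed.exists_pow_nat_eq (algebraMap F (AlgebraicClosure F) a) hp.pos
  let K : Fˣ → IntermediateField F (AlgebraicClosure F) := fun a => F⟮rt a⟯
  let T := {E : IntermediateField F (AlgebraicClosure F) |
    FiniteDimensional F E ∧ Module.finrank F E ≤ p}
  have hT : T.Finite := ((Set.finite_Iic p).biUnion fun n _ => hF1 n).subset
    fun E ⟨hE, hle⟩ => Set.mem_biUnion (Set.mem_Iic.mpr hle) ⟨hE, rfl⟩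
  have hKT : ∀ a, K a ∈ T := fun a =>
    ⟨adjoin.finiteDimensional (isIntegral_of_pow_eq_algebraMap hp.pos (hrt a)),
      finrank_adjoin_le_of_pow_eq_algebraMap hp.pos (hrt a)⟩
  have hexp : ∀ q : Fˣ ⧸ R, q ^ p = 1 := by
    rintro ⟨a⟩
    exact (QuotientGroup.eq_one_iff _).mpr ⟨a, rfl⟩
  have hfiber : ∀ a b, K b = K a → (b : Fˣ ⧸ R) ∈ Subgroup.zpowers (a : Fˣ ⧸ R) := by
    intro a b hK
    have hba : rt b ∈ K a := hK ▸ mem_adjoin_simple_self F (rt b)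
    obtain ⟨j, d, hd⟩ :=
      exists_eq_pow_mul_pow_of_mem_adjoin hp hζ a.ne_zero (hrt a) (hrt b) hba
    have hd0 : d ≠ 0 := by
      rintro rfl
      simp [zero_pow hp.ne_zero] at hd
    have hb : b = a ^ j * Units.mk0 d hd0 ^ p := Units.ext (by simp [hd, mul_comm])
    have hdR : Units.mk0 d hd0 ^ p ∈ R := ⟨_, rfl⟩
    rw [hb, QuotientGroup.mk_mul_of_mem _ hdR, QuotientGroup.mk_pow]
    exact Subgroup.npow_mem_zpowers _ j
  have hfin : ∀ E ∈ T, (QuotientGroup.mk '' (K ⁻¹' {E}) : Set (Fˣ ⧸ R)).Finite := by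
    intro E _
    rcases (K ⁻¹' {E}).eq_empty_or_nonempty with h | ⟨a, ha⟩
    · simp [h]
    · have ha_fin : IsOfFinOrder (a : Fˣ ⧸ R) :=
        isOfFinOrder_iff_pow_eq_one.mpr ⟨p, hp.pos, hexp _⟩
      refine ha_fin.finite_zpowers.subset ?_
      rintro _ ⟨b, hb, rfl⟩
      exact hfiber a b (hb.trans ha.symm)
  refine Set.infinite_univ (α := Fˣ ⧸ R) ((hT.biUnion hfin).subset fun q _ => ?_)
  obtain ⟨a, rfl⟩ := QuotientGroup.mk_surjective q
  exact Set.mem_biUnion (hKT a) ⟨a, rfl, rfl⟩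

theorem not_condF2_of_infinite_quotient_powMonoidHom_range {F : Type*} [Field F] {p : ℕ}
    (hp : 0 < p) (hQ : Infinite (Fˣ ⧸ (powMonoidHom p : Fˣ →* Fˣ).range)) : ¬ CondF2 F := by
  intro hF2
  have hinf := QuotientGroup.infinite_quotient_powMonoidHom_range_of_surjective
    (φ := (Units.mapEquiv (botEquiv F (AlgebraicClosure F)).toMulEquiv).toMonoidHom)
    (MulEquiv.surjective _) p
  exact not_finite_iff_infinite.mpr hinf (hF2 p hp ⊥ inferInstance)

theorem stmt15_general (F : Type*) [Field F] (Γ₀ : Type*) [LinearOrderedCommGroupWithZero Γ₀]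
    (v : Valuation F Γ₀) (hv : Function.Surjective v)
    (hμ : ∀ n : ℕ, 0 < n → ∃ ζ : F, IsPrimitiveRoot ζ n)
    (p : ℕ) (hp : p.Prime)
    (hΓ : Infinite (Γ₀ˣ ⧸ (powMonoidHom p : Γ₀ˣ →* Γ₀ˣ).range)) :
    Infinite (Fˣ ⧸ (powMonoidHom p : Fˣ →* Fˣ).range) ∧ ¬ CondF1 F ∧ ¬ CondF2 F := by
  obtain ⟨ζ, hζ⟩ := hμ p hp.pos
  have hQ : Infinite (Fˣ ⧸ (powMonoidHom p : Fˣ →* Fˣ).range) :=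
    QuotientGroup.infinite_quotient_powMonoidHom_range_of_surjective
      (MonoidWithZeroHom.units_map_surjective (f := v.toMonoidWithZeroHom) hv) p
  exact ⟨hQ, not_condF1_of_infinite_quotient_powMonoidHom_range hp hζ hQ,
    not_condF2_of_infinite_quotient_powMonoidHom_range hp.pos hQ⟩

/-- Let `(F,v)` be a henselian valued field with residue field of characteristic `0`,
containing all roots of unity, and value group `Γ = Γ₀ˣ`.  If `[Γ : pΓ] = ∞` for some prime
`p`, then `Fˣ/(Fˣ)ᵖ` is infinite, and `F` satisfies neither (F1) nor (F2). -/
theorem stmt15 (F : Type*) [Field F] (Γ₀ : Type*) [LinearOrderedCommGroupWithZero Γ₀]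
    (v : Valuation F Γ₀) (hv : Function.Surjective v)
    [HenselianLocalRing v.valuationSubring]
    [CharZero (IsLocalRing.ResidueField v.valuationSubring)]
    (hμ : ∀ n : ℕ, 0 < n → ∃ ζ : F, IsPrimitiveRoot ζ n)
    (p : ℕ) (hp : p.Prime)
    (hΓ : Infinite (Γ₀ˣ ⧸ (powMonoidHom p : Γ₀ˣ →* Γ₀ˣ).range)) :
    Infinite (Fˣ ⧸ (powMonoidHom p : Fˣ →* Fˣ).range) ∧ ¬ CondF1 F ∧ ¬ CondF2 F :=
  stmt15_general F Γ₀ v hv hμ p hp hΓ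
end
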